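/- Let p ∈ (0,2], m, q ∈ ℕ with q ≥ 2 and 0 < m < q, and λ ∈ (0,∞). Define Ψ₅(r) = 2λ·r^{q+m}/(1−r^q) − p(1−r^m)/(1+r^m) and let R be the minimal positive root of Ψ₅(r) = 0 in [0,1]. Suppose Ψ₅(r) > 0 on some interval (R, R+ε), ε > 0. Then for every r ∈ (R, R+ε) there exist f ∈ ℬ (with coefficients a_n), ω ∈ ℬ_m, and z ∈ 𝔻 with |z| = r such that |f(ω(z))|^p + λ·Σ_{k=1}^∞ |a_{qk+m}|·r^{qk+m} > 1; in fact one may take ω(z) = z^m and f(z) = (z+a)/(1+az) with a ∈ [0,1) sufficiently close to 1. -/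

import Mathlib

/-!
Take `ω(z) = z^m`, `z = r` and the Möbius map `f(w) = (w + t)/(1 + t w)` with `t ∈ (0,1)`, whose
coefficients are `t, (1 - t²)(-t)^{n-1}`. At `c = r^m` one has `f(c) = x > 0` with
`1 - x = (1 - t)(1 - c)/(1 + t c)`, and `x^p ≥ 1 - p(1 - x)/x`; the coefficient tail is a geometric
series. Hence the left-hand side is at least `1 + (1 - t) · mobiusGap p λ m q r t`, and the gap is
continuous in `t` with value `Ψ₅(r) > 0` at `t = 1`, so it stays positive for `t` close to `1`.
-/

open Filter Set Topology

theorem Real.one_sub_mul_div_le_rpow {x p : ℝ} (hx : 0 < x) (hp : 0 ≤ p) :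
    1 - p * (1 - x) / x ≤ x ^ p := by
  have hlog : 1 - x⁻¹ ≤ log x := one_sub_inv_le_log_of_pos hx
  calc 1 - p * (1 - x) / x = 1 + p * (1 - x⁻¹) := by field_simp; ring
    _ ≤ 1 + p * log x := by gcongr
    _ ≤ exp (p * log x) := by linarith [add_one_le_exp (p * log x)]
    _ = x ^ p := by rw [rpow_def_of_pos hx, mul_comm]

noncomputable def mobius (t : ℝ) (w : ℂ) : ℂ := (w + t) / (1 + t * w)

noncomputable def mobiusCoeff (t : ℝ) (n : ℕ) : ℂ :=
  if n = 0 then t else ((1 - t ^ 2) * (-t) ^ (n - 1) : ℝ)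

section mobius

variable {t : ℝ}

lemma norm_ofReal_mul_lt_one (ht : |t| ≤ 1) {w : ℂ} (hw : ‖w‖ < 1) : ‖(t : ℂ) * w‖ < 1 := by
  rw [norm_mul, Complex.norm_real, Real.norm_eq_abs]
  nlinarith [norm_nonneg w, abs_nonneg t]

lemma one_add_ofReal_mul_ne_zero (ht : |t| ≤ 1) {w : ℂ} (hw : ‖w‖ < 1) : 1 + (t : ℂ) * w ≠ 0 := by
  intro h
  have := norm_ofReal_mul_lt_one ht hw
  rw [eq_neg_of_add_eq_zero_right h, norm_neg, norm_one] at this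
  exact this.false

lemma normSq_one_add_mul_sub_normSq_add (t : ℝ) (w : ℂ) :
    Complex.normSq (1 + t * w) - Complex.normSq (w + t) = (1 - t ^ 2) * (1 - Complex.normSq w) := by
  simp only [Complex.normSq_apply, Complex.add_re, Complex.add_im, Complex.mul_re, Complex.mul_im,
    Complex.one_re, Complex.one_im, Complex.ofReal_re, Complex.ofReal_im]
  ring

lemma norm_mobius_le_one (ht : |t| ≤ 1) {w : ℂ} (hw : ‖w‖ < 1) : ‖mobius t w‖ ≤ 1 := by
  have hden := one_add_ofReal_mul_ne_zero ht hw
  rw [mobius, norm_div, div_le_one (norm_pos_iff.mpr hden), ← sq_le_sq₀ (norm_nonneg _)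
    (norm_nonneg _), Complex.sq_norm, Complex.sq_norm, ← sub_nonneg,
    normSq_one_add_mul_sub_normSq_add]
  have hw2 : Complex.normSq w < 1 := by
    rw [← Complex.sq_norm]; nlinarith [norm_nonneg w]
  have ht2 : t ^ 2 ≤ 1 := by nlinarith [sq_abs t, abs_nonneg t]
  exact mul_nonneg (by linarith) (by linarith)

lemma hasSum_mobiusCoeff (ht : |t| ≤ 1) {w : ℂ} (hw : ‖w‖ < 1) :
    HasSum (fun n => mobiusCoeff t n * w ^ n) (mobius t w) := by
  have hden := one_add_ofReal_mul_ne_zero ht hw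
  have hgeo := (hasSum_geometric_of_norm_lt_one (ξ := -((t : ℂ) * w))
    (by rw [norm_neg]; exact norm_ofReal_mul_lt_one ht hw)).mul_left ((1 - (t : ℂ) ^ 2) * w)
  have hcoeff : (fun n => mobiusCoeff t (n + 1) * w ^ (n + 1))
      = fun n => (1 - (t : ℂ) ^ 2) * w * (-((t : ℂ) * w)) ^ n := by
    ext n
    simp only [mobiusCoeff, Nat.add_one_ne_zero, if_false, Nat.add_sub_cancel]
    push_cast
    ring
  have htail : HasSum (fun n => mobiusCoeff t (n + 1) * w ^ (n + 1))
      ((1 - (t : ℂ) ^ 2) * w / (1 + t * w)) := by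
    rwa [hcoeff, div_eq_mul_inv, ← sub_neg_eq_add]
  have hsplit : mobius t w = mobiusCoeff t 0 * w ^ 0 + (1 - (t : ℂ) ^ 2) * w / (1 + t * w) := by
    rw [mobius, mobiusCoeff, if_pos rfl, pow_zero, mul_one, div_eq_iff hden, add_mul,
      div_mul_cancel₀ _ hden]
    ring
  rw [hsplit]
  exact HasSum.zero_add (f := fun n => mobiusCoeff t n * w ^ n) htail

lemma mobius_ofReal (t c : ℝ) : mobius t c = ((c + t) / (1 + t * c) : ℝ) := by
  simp [mobius]

lemma norm_mobiusCoeff (ht0 : 0 ≤ t) (ht1 : t ≤ 1) {n : ℕ} (hn : n ≠ 0) :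
    ‖mobiusCoeff t n‖ = (1 - t ^ 2) * t ^ (n - 1) := by
  rw [mobiusCoeff, if_neg hn, Complex.norm_real, Real.norm_eq_abs, abs_mul, abs_pow, abs_neg,
    abs_of_nonneg ht0, abs_of_nonneg (by nlinarith)]

lemma tsum_norm_mobiusCoeff_mul_pow (ht0 : 0 ≤ t) (ht1 : t ≤ 1) {r : ℝ} (hr : 0 ≤ r)
    (htr : t * r < 1) {m q : ℕ} (hq : q ≠ 0) :
    ∑' k : ℕ, ‖mobiusCoeff t (q * (k + 1) + m)‖ * r ^ (q * (k + 1) + m)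
      = (1 - t ^ 2) * t ^ (q + m - 1) * r ^ (q + m) / (1 - (t * r) ^ q) := by
  have hterm (k : ℕ) : ‖mobiusCoeff t (q * (k + 1) + m)‖ * r ^ (q * (k + 1) + m)
      = (1 - t ^ 2) * t ^ (q + m - 1) * r ^ (q + m) * ((t * r) ^ q) ^ k := by
    rw [norm_mobiusCoeff ht0 ht1 (by positivity),
      show q * (k + 1) + m - 1 = q * k + (q + m - 1) by rw [Nat.mul_succ]; omega,
      show q * (k + 1) + m = q * k + (q + m) by rw [Nat.mul_succ]; omega]
    simp only [pow_add, pow_mul, mul_pow]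
    ring
  rw [tsum_congr hterm, tsum_mul_left,
    tsum_geometric_of_lt_one (by positivity) (pow_lt_one₀ (by positivity) htr hq), div_eq_mul_inv]

lemma one_sub_mul_le_norm_mobius_rpow {c p : ℝ} (ht : 0 ≤ t) (hc : 0 ≤ c) (hct : 0 < c + t)
    (hp : 0 ≤ p) : 1 - (1 - t) * (p * ((1 - c) / (c + t))) ≤ ‖mobius t c‖ ^ p := by
  have hden : 0 < 1 + t * c := by positivity
  have hx : 0 < (c + t) / (1 + t * c) := by positivity
  rw [mobius_ofReal, Complex.norm_real, Real.norm_eq_abs, abs_of_pos hx]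
  convert Real.one_sub_mul_div_le_rpow hx hp using 2
  field_simp
  ring

end mobius

noncomputable def mobiusGap (p lam : ℝ) (m q : ℕ) (r t : ℝ) : ℝ :=
  lam * (1 + t) * t ^ (q + m - 1) * r ^ (q + m) / (1 - (t * r) ^ q)
    - p * ((1 - r ^ m) / (r ^ m + t))

section mobiusGap

variable {p lam r : ℝ} {m q : ℕ}

lemma mobiusGap_one :
    mobiusGap p lam m q r 1
      = 2 * lam * (r ^ (q + m) / (1 - r ^ q)) - p * ((1 - r ^ m) / (1 + r ^ m)) := by
  rw [mobiusGap, one_pow, one_mul, add_comm (r ^ m)]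
  ring

lemma exists_mem_Ioo_mobiusGap_pos (hr0 : 0 ≤ r) (hr1 : r < 1) (hq : q ≠ 0)
    (hpos : 0 < mobiusGap p lam m q r 1) : ∃ t ∈ Ioo (0 : ℝ) 1, 0 < mobiusGap p lam m q r t := by
  have hrq : 1 - (1 * r) ^ q ≠ 0 := by
    rw [one_mul]; exact (sub_pos.mpr (pow_lt_one₀ hr0 hr1 hq)).ne'
  have hcont : ContinuousAt (mobiusGap p lam m q r) 1 := by
    unfold mobiusGap; fun_prop (disch := first | positivity | exact hrq)
  exact ((hcont.eventually_const_lt hpos).filter_mono nhdsWithin_le_nhds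
    |>.and (Ioo_mem_nhdsLT one_pos)).exists.imp fun t ht => ⟨ht.2, ht.1⟩

lemma one_add_mul_mobiusGap_le {t : ℝ} (hp : 0 ≤ p) (ht0 : 0 < t) (ht1 : t ≤ 1) (hr0 : 0 ≤ r)
    (hr1 : r < 1) (hq : q ≠ 0) :
    1 + (1 - t) * mobiusGap p lam m q r t ≤ ‖mobius t ((r : ℂ) ^ m)‖ ^ p
      + lam * ∑' k : ℕ, ‖mobiusCoeff t (q * (k + 1) + m)‖ * r ^ (q * (k + 1) + m) := by
  have htr : t * r < 1 := by nlinarith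
  have hmod := one_sub_mul_le_norm_mobius_rpow (c := r ^ m) ht0.le (by positivity)
    (by positivity) hp
  push_cast at hmod
  rw [tsum_norm_mobiusCoeff_mul_pow ht0.le ht1 hr0 htr hq, mobiusGap]
  linarith [show lam * ((1 - t ^ 2) * t ^ (q + m - 1) * r ^ (q + m) / (1 - (t * r) ^ q))
      = (1 - t) * (lam * (1 + t) * t ^ (q + m - 1) * r ^ (q + m) / (1 - (t * r) ^ q)) by ring]

end mobiusGap

theorem stmt_11_general
    (p : ℝ) (hp0 : 0 < p)
    (m q : ℕ) (hq : 2 ≤ q)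
    (lam : ℝ)
    -- Ψ₅ and its minimal positive root R in [0,1]
    (Ψ : ℝ → ℝ)
    (hΨ : ∀ r : ℝ, Ψ r = 2 * lam * (r ^ (q + m) / (1 - r ^ q))
            - p * ((1 - r ^ m) / (1 + r ^ m)))
    (R : ℝ) (hRpos : 0 < R)
    -- Ψ₅ > 0 on the interval (R, R + ε) ⊆ (R, 1)
    (ε : ℝ) (hRε : R + ε ≤ 1)
    (hΨpos : ∀ r : ℝ, R < r → r < R + ε → 0 < Ψ r) :
    ∀ r : ℝ, R < r → r < R + ε →
      ∃ (f : ℂ → ℂ) (a : ℕ → ℂ) (ω : ℂ → ℂ) (z : ℂ),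
        (∀ w ∈ Metric.ball (0:ℂ) 1, HasSum (fun n => a n * w ^ n) (f w)) ∧
        (∀ w ∈ Metric.ball (0:ℂ) 1, ‖f w‖ ≤ 1) ∧
        DifferentiableOn ℂ ω (Metric.ball (0:ℂ) 1) ∧
        (∀ w ∈ Metric.ball (0:ℂ) 1, ‖ω w‖ ≤ 1) ∧
        (∀ k < m, iteratedDeriv k ω 0 = 0) ∧
        iteratedDeriv m ω 0 ≠ 0 ∧
        z ∈ Metric.ball (0:ℂ) 1 ∧ ‖z‖ = r ∧
        1 < ‖f (ω z)‖ ^ p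
          + lam * ∑' k : ℕ, ‖a (q * (k + 1) + m)‖ * r ^ (q * (k + 1) + m) := by
  intro r hRr hrε
  have hr0 : 0 ≤ r := (hRpos.trans hRr).le
  have hr1 : r < 1 := hrε.trans_le hRε
  have hq0 : q ≠ 0 := by omega
  obtain ⟨t, ht, hgap⟩ := exists_mem_Ioo_mobiusGap_pos hr0 hr1 hq0
    (by rw [mobiusGap_one, ← hΨ]; exact hΨpos r hRr hrε)
  have ht1 : |t| ≤ 1 := abs_le.mpr ⟨by linarith [ht.1], ht.2.le⟩
  refine ⟨mobius t, mobiusCoeff t, (· ^ m), r,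
    fun w hw => hasSum_mobiusCoeff ht1 (mem_ball_zero_iff.mp hw),
    fun w hw => norm_mobius_le_one ht1 (mem_ball_zero_iff.mp hw),
    (differentiable_pow m).differentiableOn,
    fun w hw => (norm_pow w m).trans_le (pow_le_one₀ (norm_nonneg w) (mem_ball_zero_iff.mp hw).le),
    fun k hk => by rw [iteratedDeriv_fun_pow_zero, if_neg hk.ne, Nat.cast_zero],
    by rw [iteratedDeriv_fun_pow_zero, if_pos rfl]; exact_mod_cast m.factorial_ne_zero,
    by simpa [abs_of_nonneg hr0] using hr1,
    by simp [abs_of_nonneg hr0],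
    (lt_add_of_pos_right 1 (mul_pos (sub_pos.mpr ht.2) hgap)).trans_le
      (one_add_mul_mobiusGap_le hp0.le ht.1 ht.2.le hr0 hr1 hq0)⟩

/-- Theorem 6 of the paper, sharpness part.
Let `Ψ₅(r) = 2λ r^{q+m}/(1−r^q) − p(1−r^m)/(1+r^m)` and let `R` be its minimal positive
root in `[0,1]`. If `Ψ₅ > 0` on some interval `(R, R+ε)`, then for every `r` in that
interval there exist `f ∈ ℬ`, `ω ∈ ℬ_m` and `z` with `|z| = r` such that
`|f(ω(z))|^p + λ Σ_{k≥1} |a_{qk+m}| r^{qk+m} > 1`. -/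
theorem stmt_11
    (p : ℝ) (hp0 : 0 < p) (hp2 : p ≤ 2)
    (m q : ℕ) (hq : 2 ≤ q) (hm : 0 < m) (hmq : m < q)
    (lam : ℝ) (hlam : 0 < lam)
    -- Ψ₅ and its minimal positive root R in [0,1]
    (Ψ : ℝ → ℝ)
    (hΨ : ∀ r : ℝ, Ψ r = 2 * lam * (r ^ (q + m) / (1 - r ^ q))
            - p * ((1 - r ^ m) / (1 + r ^ m)))
    (R : ℝ) (hRpos : 0 < R) (hR1 : R ≤ 1) (hroot : Ψ R = 0)
    (hmin : ∀ r : ℝ, 0 < r → r ≤ 1 → Ψ r = 0 → R ≤ r)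
    -- Ψ₅ > 0 on the interval (R, R + ε) ⊆ (R, 1)
    (ε : ℝ) (hε : 0 < ε) (hRε : R + ε ≤ 1)
    (hΨpos : ∀ r : ℝ, R < r → r < R + ε → 0 < Ψ r) :
    ∀ r : ℝ, R < r → r < R + ε →
      ∃ (f : ℂ → ℂ) (a : ℕ → ℂ) (ω : ℂ → ℂ) (z : ℂ),
        (∀ w ∈ Metric.ball (0:ℂ) 1, HasSum (fun n => a n * w ^ n) (f w)) ∧
        (∀ w ∈ Metric.ball (0:ℂ) 1, ‖f w‖ ≤ 1) ∧
        DifferentiableOn ℂ ω (Metric.ball (0:ℂ) 1) ∧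
        (∀ w ∈ Metric.ball (0:ℂ) 1, ‖ω w‖ ≤ 1) ∧
        (∀ k < m, iteratedDeriv k ω 0 = 0) ∧
        iteratedDeriv m ω 0 ≠ 0 ∧
        z ∈ Metric.ball (0:ℂ) 1 ∧ ‖z‖ = r ∧
        1 < ‖f (ω z)‖ ^ p
          + lam * ∑' k : ℕ, ‖a (q * (k + 1) + m)‖ * r ^ (q * (k + 1) + m) :=
  stmt_11_general p hp0 m q hq lam Ψ hΨ R hRpos ε hRε hΨpos
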